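/- arXiv:2105.03219 — 4 statements merged into one kernel-verified Lean document; each statement's English description precedes it below -/
import Mathlib

section
/- Let q be an odd prime power and s ≥ 3 an odd integer with gcd(q,s)=1, and write q^{φ(s)} = m·2^A + 1 with m odd and A ≥ 1. Then for any n ≥ A − 1 and any irreducible factor f(x) of Φ_{s·2^A}(x) over F_q, the polynomial f(x^{2^{n−A+1}}) is irreducible over F_q. -/
/-!
Write `N = s 2^A` and `d = ord_N q`. As `φ(s)` is even, `q^φ(s)` is an odd square, so `4 ∣ 2^A`.
Since `d ∣ φ(s)` and `m` is odd, `2^A` is the exact power of two in `q^d - 1`. Squaring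
`q^d = 1 + N t` with `t` odd and `4 ∣ N` shows that `ord_{2N} q = 2d`, with the power of two again
exact; hence `ord_{N 2^k} q = 2^k d`. Finally `f(x^{2^k})` divides `Φ_N(x^{2^k}) = Φ_{N 2^k}(x)`
and has degree `2^k d`, the degree of every irreducible factor of `Φ_{N 2^k}` over `F_q`.
-/

open Polynomial

theorem ZMod.intCast_pow_eq_one_iff_dvd {n : ℕ} (x : ℤ) (k : ℕ) :
    (x : ZMod n) ^ k = 1 ↔ (n : ℤ) ∣ x ^ k - 1 := by
  rw [← ZMod.intCast_zmod_eq_zero_iff_dvd, Int.cast_sub, Int.cast_pow, Int.cast_one, sub_eq_zero]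

theorem orderOf_intCast_zmod_mul_two {N : ℕ} (hN : 4 ∣ N) {x : ℤ}
    (hx : (x : ZMod (N * 2)) ^ orderOf (x : ZMod N) ≠ 1) :
    orderOf (x : ZMod (N * 2)) = orderOf (x : ZMod N) * 2 ∧
      (x : ZMod (N * 2 * 2)) ^ orderOf (x : ZMod (N * 2)) ≠ 1 := by
  set d := orderOf (x : ZMod N)
  obtain ⟨t, ht⟩ := (ZMod.intCast_pow_eq_one_iff_dvd x d).mp (pow_orderOf_eq_one _)
  have ht_odd : Odd t := by
    refine Int.not_even_iff_odd.mp fun ⟨u, hu⟩ => hx ?_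
    rw [ZMod.intCast_pow_eq_one_iff_dvd, ht, hu]
    exact ⟨u, by push_cast; ring⟩
  obtain ⟨M, rfl⟩ := hN
  -- Squaring `x ^ d = 1 + N t` with `N = 4 M` gives `x ^ (2 d) = 1 + 2 N t (2 M t + 1)`.
  have hsq : x ^ (d * 2) - 1 = ((4 * M * 2 : ℕ) : ℤ) * (t * (2 * M * t + 1)) := by
    rw [pow_mul, show x ^ d = 4 * M * t + 1 by push_cast at ht; linarith]
    push_cast; ring
  have hodd : Odd (t * (2 * M * t + 1)) := ht_odd.mul ⟨M * t, by ring⟩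
  have hd : d ≠ 0 := fun h0 => hx (by rw [h0, pow_zero])
  set e := orderOf (x : ZMod (4 * M * 2))
  have he_dvd : e ∣ d * 2 :=
    orderOf_dvd_of_pow_eq_one ((ZMod.intCast_pow_eq_one_iff_dvd x _).mpr ⟨_, hsq⟩)
  have hd_dvd : d ∣ e := by
    refine orderOf_dvd_of_pow_eq_one ((ZMod.intCast_pow_eq_one_iff_dvd x _).mpr ?_)
    exact (Int.natCast_dvd_natCast.mpr (dvd_mul_right _ 2)).trans
      ((ZMod.intCast_pow_eq_one_iff_dvd x _).mp (pow_orderOf_eq_one _))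
  have he : e = d * 2 := by
    obtain ⟨c, hc⟩ := hd_dvd
    have hc2 : c ∣ 2 := (Nat.mul_dvd_mul_iff_left (Nat.pos_of_ne_zero hd)).mp (hc ▸ he_dvd)
    rcases (Nat.dvd_prime Nat.prime_two).mp hc2 with rfl | rfl
    · rw [mul_one] at hc
      exact absurd (hc ▸ pow_orderOf_eq_one (x : ZMod (4 * M * 2))) hx
    · exact hc
  refine ⟨he, ?_⟩
  have hM : ((4 * M * 2 : ℕ) : ℤ) ≠ 0 := by
    rintro h0
    exact hx ((ZMod.intCast_pow_eq_one_iff_dvd x d).mpr (by simp_all))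
  rw [he, Ne, ZMod.intCast_pow_eq_one_iff_dvd, hsq, Nat.cast_mul _ 2, Nat.cast_two,
    mul_dvd_mul_iff_left hM]
  exact Int.not_even_iff_odd.mpr hodd ∘ even_iff_two_dvd.mpr

theorem orderOf_intCast_zmod_mul_two_pow {N : ℕ} (hN : 4 ∣ N) {x : ℤ}
    (hx : (x : ZMod (N * 2)) ^ orderOf (x : ZMod N) ≠ 1) (k : ℕ) :
    orderOf (x : ZMod (N * 2 ^ k)) = orderOf (x : ZMod N) * 2 ^ k := by
  suffices orderOf (x : ZMod (N * 2 ^ k)) = orderOf (x : ZMod N) * 2 ^ k ∧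
      (x : ZMod (N * 2 ^ k * 2)) ^ orderOf (x : ZMod (N * 2 ^ k)) ≠ 1 from this.1
  induction k with
  | zero =>
    rw [pow_zero, mul_one, mul_one]
    exact ⟨rfl, hx⟩
  | succ k ih =>
    obtain ⟨hord, hne⟩ := orderOf_intCast_zmod_mul_two (hN.mul_right _) ih.2
    rw [pow_succ, ← mul_assoc]
    exact ⟨by rw [hord, ih.1, mul_assoc], hne⟩

theorem Polynomial.cyclotomic_expand_pow_eq_cyclotomic {p n : ℕ} (hp : p.Prime) (hdiv : p ∣ n)
    (R : Type*) [CommRing R] (k : ℕ) :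
    expand R (p ^ k) (cyclotomic n R) = cyclotomic (n * p ^ k) R := by
  induction k with
  | zero => simp
  | succ k ih =>
    rw [pow_succ', ← expand_expand, ih, cyclotomic_expand_eq_cyclotomic hp (hdiv.mul_right _)]
    ring_nf

theorem Polynomial.irreducible_iff_natDegree_eq_orderOf_of_dvd_cyclotomic {F : Type*} [Field F]
    [Fintype F] {n : ℕ} (hn : (Fintype.card F).Coprime n) {P : F[X]}
    (hP : P ∣ cyclotomic n F) :
    Irreducible P ↔ P.natDegree = orderOf (Fintype.card F : ZMod n) := by
  obtain ⟨f, hp, hcard⟩ := FiniteField.card F (ringChar F)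
  have := Fact.mk hp
  have hpn : (ringChar F).Coprime n := Nat.Coprime.coprime_dvd_left
    (hcard ▸ dvd_pow_self _ f.ne_zero) hn
  have hord :
      orderOf (ZMod.unitOfCoprime _ (hpn.pow_left f)) = orderOf (Fintype.card F : ZMod n) := by
    rw [← orderOf_units, ZMod.coe_unitOfCoprime, hcard]
  rw [← hord]
  exact ⟨natDegree_of_dvd_cyclotomic_of_irreducible hcard hpn hP,
    irreducible_of_dvd_cyclotomic_of_natDegree hcard hpn hP⟩

theorem four_dvd_two_pow_of_sq_eq {x m A : ℕ} (hx : Odd x) (hm : Odd m)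
    (h : x ^ 2 = m * 2 ^ A + 1) : 4 ∣ 2 ^ A := by
  obtain ⟨c, rfl⟩ := hx
  have hc : m * 2 ^ A = 4 * (c * (c + 1)) := by linarith [h]
  obtain ⟨m', rfl⟩ := hm
  rw [show 4 = 2 ^ 2 by norm_num, Nat.pow_dvd_pow_iff_le_right one_lt_two]
  by_contra! hA
  interval_cases A <;> omega

theorem intCast_pow_orderOf_ne_one_of_pow_totient_eq {q s m A : ℕ} (hs : Odd s)
    (hqs : q.Coprime s) (hm : Odd m) (h : q ^ Nat.totient s = m * 2 ^ A + 1) :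
    ((q : ℤ) : ZMod (s * 2 ^ A * 2)) ^ orderOf ((q : ℤ) : ZMod (s * 2 ^ A)) ≠ 1 := by
  have hsm : s ∣ m := by
    have hmod := Nat.ModEq.pow_totient hqs
    rw [h] at hmod
    exact (hs.coprime_two_right.pow_right A).dvd_of_dvd_mul_right
      (Nat.modEq_zero_iff_dvd.mp (Nat.ModEq.add_right_cancel' 1 hmod))
  have hcast : (q : ℤ) ^ Nat.totient s - 1 = ((m * 2 ^ A : ℕ) : ℤ) := by
    rw [sub_eq_iff_eq_add]
    exact_mod_cast h
  have hN : ((q : ℤ) : ZMod (s * 2 ^ A)) ^ Nat.totient s = 1 := by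
    rw [ZMod.intCast_pow_eq_one_iff_dvd, hcast]
    exact Int.natCast_dvd_natCast.mpr (Nat.mul_dvd_mul_right hsm _)
  obtain ⟨c, hc⟩ := orderOf_dvd_of_pow_eq_one hN
  intro h1
  have h2 : ((q : ℤ) : ZMod (s * 2 ^ A * 2)) ^ Nat.totient s = 1 := by
    rw [hc, pow_mul, h1, one_pow]
  rw [ZMod.intCast_pow_eq_one_iff_dvd, hcast, Int.natCast_dvd_natCast] at h2
  have h2m : 2 ∣ m :=
    Nat.dvd_of_mul_dvd_mul_right (pow_pos two_pos A) ((Dvd.intro_left s (by ring)).trans h2)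
  exact hm.not_two_dvd_nat h2m

theorem stmt3_general (q : ℕ) (hqodd : Odd q)
    (s : ℕ) (hs : 3 ≤ s) (hsodd : Odd s) (hgcd : Nat.Coprime q s)
    (m A : ℕ) (hmodd : Odd m) (hqs : q ^ Nat.totient s = m * 2 ^ A + 1)
    (F : Type) [Field F] [Fintype F] (hcard : Fintype.card F = q)
    (n : ℕ)
    (f : F[X]) (hf : Irreducible f) (hdvd : f ∣ cyclotomic (s * 2 ^ A) F) :
    Irreducible (f.comp (X ^ (2 ^ (n - A + 1)))) := by
  set k := n - A + 1
  have hcop (e : ℕ) : (Fintype.card F).Coprime (s * 2 ^ A * 2 ^ e) := by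
    rw [hcard]
    exact (hgcd.mul_right (hqodd.coprime_two_right.pow_right A)).mul_right
      (hqodd.coprime_two_right.pow_right e)
  have h4 : 4 ∣ s * 2 ^ A := by
    obtain ⟨r, hr⟩ := Nat.totient_even (by omega : 2 < s)
    refine dvd_mul_of_dvd_right (four_dvd_two_pow_of_sq_eq (hqodd.pow (n := r)) hmodd ?_) s
    rw [← pow_mul, mul_comm, two_mul, ← hr, hqs]
  have hdeg := (irreducible_iff_natDegree_eq_orderOf_of_dvd_cyclotomic
    (by simpa using hcop 0) hdvd).mp hf
  have hexp : expand F (2 ^ k) f ∣ cyclotomic (s * 2 ^ A * 2 ^ k) F := by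
    rw [← cyclotomic_expand_pow_eq_cyclotomic Nat.prime_two (dvd_trans (by norm_num) h4)]
    exact _root_.map_dvd (expand F (2 ^ k)) hdvd
  rw [← expand_eq_comp_X_pow,
    irreducible_iff_natDegree_eq_orderOf_of_dvd_cyclotomic (hcop k) hexp, natDegree_expand, hdeg,
    hcard]
  simpa only [Int.cast_natCast] using (orderOf_intCast_zmod_mul_two_pow h4
    (intCast_pow_orderOf_ne_one_of_pow_totient_eq hsodd hgcd hmodd hqs) k).symm

/-- If q is an odd prime power, s ≥ 3 odd with gcd(q,s)=1, q^{φ(s)} = m·2^A + 1 with m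
odd and A ≥ 1, then for any n ≥ A − 1 and any irreducible factor f of Φ_{s·2^A} over
F_q, the polynomial f(x^{2^{n−A+1}}) is irreducible over F_q. -/
theorem stmt3 (q : ℕ) (hq : IsPrimePow q) (hqodd : Odd q)
    (s : ℕ) (hs : 3 ≤ s) (hsodd : Odd s) (hgcd : Nat.Coprime q s)
    (m A : ℕ) (hA : 1 ≤ A) (hmodd : Odd m) (hqs : q ^ Nat.totient s = m * 2 ^ A + 1)
    (F : Type) [Field F] [Fintype F] (hcard : Fintype.card F = q)
    (n : ℕ) (hn : A - 1 ≤ n)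
    (f : F[X]) (hf : Irreducible f) (hdvd : f ∣ cyclotomic (s * 2 ^ A) F) :
    Irreducible (f.comp (X ^ (2 ^ (n - A + 1)))) :=
  stmt3_general q hqodd s hs hsodd hgcd m A hmodd hqs F hcard n f hf hdvd
end

section
/- Let N = s·2^{n+1} with s ≥ 3 odd, let ρ be an odd rational prime with gcd(ρ,s)=1, write ρ^{φ(s)} = m·2^A + 1 with m odd, and set r = min(A−1, n). Let f(x) be an irreducible factor of Φ_N(x) mod ρ and 𝔭 = ⟨ρ, f(ζ_N)⟩ ⊂ ℤ[ζ_N]. Then for each 1 ≤ k ≤ 2^{n−r} − 1, the automorphism σ of ℚ(ζ_N) sending ζ_N to ζ_N^{k·s·2^{r+1}+1} lies in the decomposition group of 𝔭, i.e. σ(𝔭) = 𝔭. -/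
open Polynomial NumberField

/-- For N = s·2^{n+1} (s ≥ 3 odd), ρ an odd prime coprime to s with
ρ^{φ(s)} = m·2^A + 1 (m odd), r = min(A−1,n), and 𝔭 = ⟨ρ, f(ζ_N)⟩ where
f(x) = g(x^{2^{n−r}}) for an irreducible factor g of Φ_{s·2^{r+1}} mod ρ, every
automorphism σ with σ(ζ_N) = ζ_N^{k·s·2^{r+1}+1} (1 ≤ k ≤ 2^{n−r}−1) lies in the
decomposition group of 𝔭, i.e. σ(𝔭) = 𝔭. -/
theorem stmt7 (s n : ℕ) (hs3 : 3 ≤ s) (hsodd : Odd s)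
    (N : ℕ+) (hN : (N : ℕ) = s * 2 ^ (n + 1))
    (ρ : ℕ) (hρ : ρ.Prime) (hρodd : Odd ρ) (hρs : Nat.Coprime ρ s)
    (m A : ℕ) (hmodd : Odd m) (hA : 1 ≤ A) (hdecomp : ρ ^ Nat.totient s = m * 2 ^ A + 1)
    (r : ℕ) (hr : r = min (A - 1) n)
    (g : Polynomial ℤ)
    (hgirr : Irreducible (g.map (Int.castRingHom (ZMod ρ))))
    (hgdvd : g.map (Int.castRingHom (ZMod ρ)) ∣ cyclotomic (s * 2 ^ (r + 1)) (ZMod ρ))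
    (ζ : 𝓞 (CyclotomicField N ℚ)) (hζ : IsPrimitiveRoot ζ N)
    (𝔭 : Ideal (𝓞 (CyclotomicField N ℚ)))
    (h𝔭 : 𝔭 = Ideal.span {(ρ : 𝓞 (CyclotomicField N ℚ)),
        Polynomial.aeval ζ (g.comp (X ^ (2 ^ (n - r))))})
    (k : ℕ) (hk1 : 1 ≤ k) (hk2 : k ≤ 2 ^ (n - r) - 1)
    (σ : 𝓞 (CyclotomicField N ℚ) ≃ₐ[ℤ] 𝓞 (CyclotomicField N ℚ))
    (hσ : σ ζ = ζ ^ (k * s * 2 ^ (r + 1) + 1)) :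
    Ideal.map σ.toRingEquiv.toRingHom 𝔭 = 𝔭 := by
  subst h𝔭
  have hrn : r ≤ n := by omega
  have key : σ (aeval ζ (g.comp (X ^ (2 ^ (n - r))))) =
      aeval ζ (g.comp (X ^ (2 ^ (n - r)))) := by
    have h1 : ∀ x : 𝓞 (CyclotomicField N ℚ),
        aeval x (g.comp (X ^ (2 ^ (n - r)))) = aeval (x ^ 2 ^ (n - r)) g := by
      intro x
      rw [aeval_comp, map_pow, aeval_X]
    have h2 : σ (aeval ζ (g.comp (X ^ (2 ^ (n - r))))) =
        aeval (σ ζ) (g.comp (X ^ (2 ^ (n - r)))) :=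
      (aeval_algHom_apply (σ : 𝓞 (CyclotomicField N ℚ) →ₐ[ℤ] 𝓞 (CyclotomicField N ℚ)) ζ _).symm
    rw [h2, hσ, h1, h1, ← pow_mul]
    congr 2
    have hexp : (k * s * 2 ^ (r + 1) + 1) * 2 ^ (n - r) = k * (N : ℕ) + 2 ^ (n - r) := by
      rw [hN]
      have : 2 ^ (r + 1) * 2 ^ (n - r) = 2 ^ (n + 1) := by
        rw [← pow_add]; congr 1; omega
      calc (k * s * 2 ^ (r + 1) + 1) * 2 ^ (n - r)
          = k * (s * (2 ^ (r + 1) * 2 ^ (n - r))) + 2 ^ (n - r) := by ring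
        _ = k * (s * 2 ^ (n + 1)) + 2 ^ (n - r) := by rw [this]
    rw [hexp, pow_add, mul_comm k, pow_mul, hζ.pow_eq_one, one_pow, one_mul]
  rw [Ideal.map_span]
  congr 1
  have himg : σ.toRingEquiv.toRingHom '' {(ρ : 𝓞 (CyclotomicField N ℚ)),
      aeval ζ (g.comp (X ^ (2 ^ (n - r))))} =
      {σ (ρ : 𝓞 (CyclotomicField N ℚ)), σ (aeval ζ (g.comp (X ^ (2 ^ (n - r)))))} :=
    Set.image_pair _ _ _
  rw [himg, key, map_natCast]
end

section
/- Let N = s·2^{n+1} with s ≥ 3 odd and 0 ≤ r ≤ n, and let L = ℚ(ζ_N), K = ℚ(ζ_N^{2^{n−r}}). For any x_0, …, x_{2^{n−r}−1} ∈ K, the element x = ∑_{k=0}^{2^{n−r}−1} x_k ζ_N^k satisfies Tr_{L/ℚ}(x·conj(x)) = 2^{n−r} · ∑_{k=0}^{2^{n−r}−1} Tr_{K/ℚ}(x_k·conj(x_k)). -/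
/-!
Write `K = ℚ(ζ^d)` and `L = ℚ(ζ)` with `d = 2^(n-r)`, `N = d * M`. Since `φ(N) = d * φ(M)`, the
extension `L/K` has degree `d` and is generated by `ζ`, whose `d`-th power lies in `K`. Hence the
`K`-embeddings of `L` into `ℂ` send `ζ` exactly to the `ω^i ζ` with `ω = ζ^M` a primitive `d`-th
root of unity, and `Tr_{L/K}(ζ^m) = ζ^m ∑ᵢ ω^(im)` vanishes unless `d ∣ m`. As
`conj ζ = ζ⁻¹`, expanding `x * conj x` leaves only the diagonal terms, so
`Tr_{L/K}(x * conj x) = d ∑ₖ xₖ * conj xₖ`, and transitivity of the trace finishes the proof.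
-/

open IntermediateField Module

section KummerTrace

variable {K L E : Type*} [Field K] [Field L] [Field E] [Algebra K L] [Algebra K E]
  {d : ℕ} {θ : L} {c : K} {ω : E}

theorem AlgHom.exists_apply_eq_pow_mul_apply [NeZero d] (hc : θ ^ d = algebraMap K L c)
    (hω : IsPrimitiveRoot ω d) (σ τ : L →ₐ[K] E) : ∃ i : Fin d, σ θ = ω ^ (i : ℕ) * τ θ := by
  have hpow : σ θ ^ d = τ θ ^ d := by simp only [← map_pow, hc, AlgHom.commutes]
  by_cases hτ : τ θ = 0
  · refine ⟨0, ?_⟩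
    rw [hτ, zero_pow (NeZero.ne d), pow_eq_zero_iff (NeZero.ne d)] at hpow
    rw [hpow, hτ, mul_zero]
  obtain ⟨i, hi, hωi⟩ := hω.eq_pow_of_pow_eq_one (ξ := σ θ / τ θ)
    (by rw [div_pow, hpow, div_self (pow_ne_zero d hτ)])
  exact ⟨⟨i, hi⟩, by rw [Fin.val_mk, hωi, div_mul_cancel₀ _ hτ]⟩

variable [FiniteDimensional K L] [Algebra.IsSeparable K L] [IsAlgClosed E]

theorem sum_algHom_apply_eq_sum_pow_mul (hθ : Algebra.adjoin K {θ} = ⊤)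
    (hrank : finrank K L = d) (hc : θ ^ d = algebraMap K L c) (hω : IsPrimitiveRoot ω d)
    (τ : L →ₐ[K] E) (f : E → E) :
    ∑ σ : L →ₐ[K] E, f (σ θ) = ∑ i : Fin d, f (ω ^ (i : ℕ) * τ θ) := by
  have : NeZero d := ⟨hrank ▸ finrank_pos.ne'⟩
  choose index hindex using fun σ => AlgHom.exists_apply_eq_pow_mul_apply hc hω σ τ
  have hinj : Function.Injective index := fun σ σ' h =>
    AlgHom.ext_of_adjoin_eq_top hθ fun _ hx => by
      rw [Set.mem_singleton_iff.mp hx, hindex σ, hindex σ', h]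
  have hbij : Function.Bijective index := (Fintype.bijective_iff_injective_and_card index).mpr
    ⟨hinj, by rw [AlgHom.card, hrank, Fintype.card_fin]⟩
  exact Fintype.sum_bijective index hbij _ _ fun σ => by rw [hindex σ]

theorem trace_zpow_eq_zero (hθ : Algebra.adjoin K {θ} = ⊤)
    (hrank : finrank K L = d) (hc : θ ^ d = algebraMap K L c) (hω : IsPrimitiveRoot ω d)
    {m : ℤ} (hm : ¬ (d : ℤ) ∣ m) : Algebra.trace K L (θ ^ m) = 0 := by
  apply (algebraMap K E).injective
  have hωm : ω ^ m ≠ 1 := (hω.zpow_eq_one_iff_dvd m).not.mpr hm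
  have hωmd : (ω ^ m) ^ d = 1 := by
    rw [← zpow_natCast, ← zpow_mul, mul_comm, zpow_mul, zpow_natCast, hω.pow_eq_one, one_zpow]
  rw [trace_eq_sum_embeddings, map_zero]
  simp_rw [map_zpow₀]
  rw [sum_algHom_apply_eq_sum_pow_mul hθ hrank hc hω IsAlgClosed.lift (· ^ m)]
  simp_rw [mul_zpow, ← zpow_natCast, ← zpow_mul, mul_comm _ m, zpow_mul, zpow_natCast]
  rw [← Finset.sum_mul, Fin.sum_univ_eq_sum_range (fun i => (ω ^ m) ^ i), geom_sum_eq hωm, hωmd,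
    sub_self, zero_div, zero_mul]

theorem trace_sum_mul_sum_inv_pow (hθ0 : θ ≠ 0) (hθ : Algebra.adjoin K {θ} = ⊤)
    (hrank : finrank K L = d) (hc : θ ^ d = algebraMap K L c) (hω : IsPrimitiveRoot ω d)
    (a b : Fin d → K) :
    Algebra.trace K L ((∑ k : Fin d, algebraMap K L (a k) * θ ^ (k : ℕ)) *
      ∑ l : Fin d, algebraMap K L (b l) * θ⁻¹ ^ (l : ℕ)) = d * ∑ k : Fin d, a k * b k := by
  have htrace : ∀ k l : Fin d,
      Algebra.trace K L (θ ^ ((k : ℤ) - l)) = if k = l then (d : K) else 0 := by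
    intro k l
    split_ifs with hkl
    · rw [hkl, sub_self, zpow_zero, ← map_one (algebraMap K L), Algebra.trace_algebraMap, hrank,
        nsmul_eq_mul, mul_one]
    · refine trace_zpow_eq_zero (E := E) hθ hrank hc hω fun hdvd => hkl (Fin.ext ?_)
      have := Int.eq_zero_of_abs_lt_dvd hdvd (by rw [abs_lt]; omega)
      omega
  rw [Finset.sum_mul_sum, map_sum, Finset.mul_sum]
  refine Finset.sum_congr rfl fun k _ => ?_
  rw [map_sum]
  calc ∑ l : Fin d, Algebra.trace K L (algebraMap K L (a k) * θ ^ (k : ℕ) *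
        (algebraMap K L (b l) * θ⁻¹ ^ (l : ℕ)))
      = ∑ l : Fin d, a k * b l * Algebra.trace K L (θ ^ ((k : ℤ) - l)) := by
        refine Finset.sum_congr rfl fun l _ => ?_
        have hsmul : algebraMap K L (a k) * θ ^ (k : ℕ) * (algebraMap K L (b l) * θ⁻¹ ^ (l : ℕ))
            = (a k * b l) • θ ^ ((k : ℤ) - l) := by
          rw [Algebra.smul_def, map_mul, zpow_sub₀ hθ0, zpow_natCast, zpow_natCast, div_eq_mul_inv,
            ← inv_pow]
          ring
        rw [hsmul, map_smul, smul_eq_mul]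
    _ = d * (a k * b k) := by
        simp only [htrace, mul_ite, mul_zero, Finset.sum_ite_eq, Finset.mem_univ, ↓reduceIte]
        ring

end KummerTrace

theorem Nat.totient_prime_pow_mul_of_dvd {p m : ℕ} (hp : p.Prime) (h : p ∣ m) (k : ℕ) :
    (p ^ k * m).totient = p ^ k * m.totient := by
  induction k with
  | zero => simp
  | succ k ih =>
    rw [pow_succ', mul_assoc, Nat.totient_mul_of_prime_of_dvd hp (dvd_mul_of_dvd_right h _), ih,
      mul_assoc]

theorem IsPrimitiveRoot.finrank_adjoin {E : Type*} [Field E] [CharZero E] {ζ : E} {n : ℕ}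
    (hζ : IsPrimitiveRoot ζ n) (hn : 0 < n) : finrank ℚ ℚ⟮ζ⟯ = n.totient := by
  rw [adjoin.finrank (hζ.isIntegral hn).tower_top, ← Polynomial.cyclotomic_eq_minpoly_rat hζ hn,
    Polynomial.natDegree_cyclotomic]

theorem trace_adjoin_primitiveRoot_sum_mul_sum_inv {E : Type*} [Field E] [CharZero E]
    [IsAlgClosed E] {N d M : ℕ} (hN : 0 < N) (hNdM : N = d * M)
    (htot : N.totient = d * M.totient) {ζ : E} (hζ : IsPrimitiveRoot ζ N)
    (x x' : Fin d → ℚ⟮ζ ^ d⟯) (y y' : ℚ⟮ζ⟯)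
    (hy : (y : E) = ∑ k : Fin d, (x k : E) * ζ ^ (k : ℕ))
    (hy' : (y' : E) = ∑ k : Fin d, (x' k : E) * ζ⁻¹ ^ (k : ℕ)) :
    Algebra.trace ℚ ℚ⟮ζ⟯ (y * y')
      = d * ∑ k : Fin d, Algebra.trace ℚ ℚ⟮ζ ^ d⟯ (x k * x' k) := by
  have hM : 0 < M := Nat.pos_of_mul_pos_left (hNdM ▸ hN)
  have hζint : IsIntegral ℚ ζ := (hζ.isIntegral hN).tower_top
  have hKL : ℚ⟮ζ ^ d⟯ ≤ ℚ⟮ζ⟯ := adjoin_simple_le_iff.mpr (pow_mem (mem_adjoin_simple_self ℚ ζ) d)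
  let : Algebra ℚ⟮ζ ^ d⟯ ℚ⟮ζ⟯ := (inclusion hKL).toAlgebra
  have : IsScalarTower ℚ ℚ⟮ζ ^ d⟯ ℚ⟮ζ⟯ := IsScalarTower.of_algebraMap_eq fun _ => rfl
  have : FiniteDimensional ℚ ℚ⟮ζ⟯ := adjoin.finiteDimensional hζint
  have : FiniteDimensional ℚ ℚ⟮ζ ^ d⟯ := adjoin.finiteDimensional (hζint.pow d)
  have : FiniteDimensional ℚ⟮ζ ^ d⟯ ℚ⟮ζ⟯ := FiniteDimensional.right ℚ _ _
  have hrank : finrank ℚ⟮ζ ^ d⟯ ℚ⟮ζ⟯ = d := by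
    have hmul := finrank_mul_finrank ℚ ℚ⟮ζ ^ d⟯ ℚ⟮ζ⟯
    rw [(hζ.pow hN hNdM).finrank_adjoin hM, hζ.finrank_adjoin hN, htot, mul_comm] at hmul
    exact Nat.eq_of_mul_eq_mul_right (Nat.totient_pos.mpr hM) hmul
  set θ := AdjoinSimple.gen ℚ ζ
  have hθ : Algebra.adjoin ℚ⟮ζ ^ d⟯ {θ} = ⊤ := by
    refine Algebra.eq_top_iff.mpr fun z => ?_
    have hz := (SetLike.ext_iff.mp (adjoin.powerBasis hζint).adjoin_gen_eq_top z).mpr trivial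
    rw [adjoin.powerBasis_gen] at hz
    induction hz using Algebra.adjoin_induction with
    | mem _ hx => exact Algebra.subset_adjoin hx
    | algebraMap q => exact Subalgebra.algebraMap_mem _ (algebraMap ℚ ℚ⟮ζ ^ d⟯ q)
    | add _ _ _ _ h₁ h₂ => exact add_mem h₁ h₂
    | mul _ _ _ _ h₁ h₂ => exact mul_mem h₁ h₂
  have hc : θ ^ d = algebraMap ℚ⟮ζ ^ d⟯ ℚ⟮ζ⟯ (AdjoinSimple.gen ℚ (ζ ^ d)) := rfl
  have hθ0 : θ ≠ 0 := fun h => hζ.ne_zero hN.ne' (congrArg Subtype.val h)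
  have hyθ : y = ∑ k : Fin d, algebraMap ℚ⟮ζ ^ d⟯ ℚ⟮ζ⟯ (x k) * θ ^ (k : ℕ) := by
    apply Subtype.coe_injective
    push_cast [hy]
    rfl
  have hy'θ : y' = ∑ k : Fin d, algebraMap ℚ⟮ζ ^ d⟯ ℚ⟮ζ⟯ (x' k) * θ⁻¹ ^ (k : ℕ) := by
    apply Subtype.coe_injective
    push_cast [hy']
    rfl
  rw [← Algebra.trace_trace (S := ℚ⟮ζ ^ d⟯), hyθ, hy'θ,
    trace_sum_mul_sum_inv_pow (E := E) hθ0 hθ hrank hc (hζ.pow hN (by rw [hNdM, mul_comm])),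
    ← nsmul_eq_mul, map_nsmul, map_sum, nsmul_eq_mul]

theorem stmt11_general (s n r : ℕ) (hsodd : Odd s) (hr : r ≤ n)
    (N : ℕ) (hN : N = s * 2 ^ (n + 1))
    (ζ : ℂ) (hζ : IsPrimitiveRoot ζ N)
    (L : IntermediateField ℚ ℂ) (hL : L = ℚ⟮ζ⟯)
    (K : IntermediateField ℚ ℂ) (hK : K = ℚ⟮ζ ^ (2 ^ (n - r))⟯)
    (x : Fin (2 ^ (n - r)) → K)
    (y : L) (hy : (y : ℂ) = ∑ k : Fin (2 ^ (n - r)), (x k : ℂ) * ζ ^ (k : ℕ))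
    (y' : L) (hy' : (y' : ℂ) = (starRingEnd ℂ) (y : ℂ))
    (x' : Fin (2 ^ (n - r)) → K)
    (hx' : ∀ k, (x' k : ℂ) = (starRingEnd ℂ) (x k : ℂ)) :
    Algebra.trace ℚ L (y * y')
      = (2 ^ (n - r) : ℚ) * ∑ k : Fin (2 ^ (n - r)), Algebra.trace ℚ K (x k * x' k) := by
  subst hL hK
  have hN0 : 0 < N := hN ▸ Nat.mul_pos hsodd.pos (by positivity)
  have hNdM : N = 2 ^ (n - r) * (s * 2 ^ (r + 1)) := by
    rw [hN, mul_left_comm, ← pow_add]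
    congr 2
    omega
  have htot := Nat.totient_prime_pow_mul_of_dvd Nat.prime_two
    (dvd_mul_of_dvd_right (dvd_pow_self 2 r.succ_ne_zero) s) (n - r)
  have hconj : starRingEnd ℂ ζ = ζ⁻¹ :=
    (Complex.inv_eq_conj (Complex.norm_eq_one_of_pow_eq_one hζ.pow_eq_one hN0.ne')).symm
  have hy'' : (y' : ℂ) = ∑ k : Fin (2 ^ (n - r)), (x' k : ℂ) * ζ⁻¹ ^ (k : ℕ) := by
    simp only [hy', hy, map_sum, map_mul, map_pow, hconj, hx']
  rw [trace_adjoin_primitiveRoot_sum_mul_sum_inv hN0 hNdM (hNdM ▸ htot) hζ x x' y y' hy hy'']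
  push_cast
  rfl

/-- For N = s·2^{n+1} (s ≥ 3 odd), 0 ≤ r ≤ n, L = ℚ(ζ_N), K = ℚ(ζ_N^{2^{n−r}}) and
x_k ∈ K, the element x = ∑_k x_k ζ_N^k satisfies
Tr_{L/ℚ}(x·conj(x)) = 2^{n−r} · ∑_k Tr_{K/ℚ}(x_k·conj(x_k)). -/
theorem stmt11 (s n r : ℕ) (hs3 : 3 ≤ s) (hsodd : Odd s) (hr : r ≤ n)
    (N : ℕ) (hN : N = s * 2 ^ (n + 1))
    (ζ : ℂ) (hζ : IsPrimitiveRoot ζ N)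
    (L : IntermediateField ℚ ℂ) (hL : L = ℚ⟮ζ⟯)
    (K : IntermediateField ℚ ℂ) (hK : K = ℚ⟮ζ ^ (2 ^ (n - r))⟯)
    (x : Fin (2 ^ (n - r)) → K)
    (y : L) (hy : (y : ℂ) = ∑ k : Fin (2 ^ (n - r)), (x k : ℂ) * ζ ^ (k : ℕ))
    (y' : L) (hy' : (y' : ℂ) = (starRingEnd ℂ) (y : ℂ))
    (x' : Fin (2 ^ (n - r)) → K)
    (hx' : ∀ k, (x' k : ℂ) = (starRingEnd ℂ) (x k : ℂ)) :
    Algebra.trace ℚ L (y * y')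
      = (2 ^ (n - r) : ℚ) * ∑ k : Fin (2 ^ (n - r)), Algebra.trace ℚ K (x k * x' k) :=
  stmt11_general s n r hsodd hr N hN ζ hζ L hL K hK x y hy y' hy' x' hx'
end

section
/- Let L/ℚ be a finite Galois extension with Galois group G, let I₁, …, I_d be ideals of O_L and b₁, …, b_d ∈ L^D be L-linearly independent vectors, forming the module M = ⊕_k I_k b_k. For each k let Δ_k = {σ ∈ G : σ(I_k b_k) = I_k b_k} (where σ acts coordinatewise on vectors) and K_k its fixed field. Then there exists α_k ∈ L^× such that b_k = α_k · b_k′ with b_k′ ∈ K_k^D. -/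
open NumberField

/-!
If `σ` maps the pseudo-ideal `I b` into itself, then comparing `σ (x b)` with `y b` for a fixed
nonzero `x ∈ I` shows that `σ b` is a scalar multiple of `b`. Hence, normalising `b` by one of its
nonzero coordinates `b_{j₀}`, the vector `b / b_{j₀}` is fixed coordinatewise by the whole
stabiliser, and `b = b_{j₀} · (b / b_{j₀})`.
-/

def idealMultiples {L ι : Type*} [Field L] (I : Ideal (𝓞 L)) (v : ι → L) : Set (ι → L) :=
  {w | ∃ x ∈ I, w = fun j => (x : L) * v j}

theorem exists_map_eq_mul_of_image_idealMultiples_subset {L ι F : Type*} [Field L]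
    [FunLike F L L] [RingHomClass F L L] (σ : F) {I : Ideal (𝓞 L)} (hI : I ≠ ⊥) (v : ι → L)
    (hσ : (fun w j => σ (w j)) '' idealMultiples I v ⊆ idealMultiples I v) :
    ∃ μ : L, ∀ j, σ (v j) = μ * v j := by
  obtain ⟨x, hxI, hx⟩ := Submodule.exists_mem_ne_zero_of_ne_bot hI
  obtain ⟨y, -, hy⟩ := hσ ⟨_, ⟨x, hxI, rfl⟩, rfl⟩
  have hσx : σ (x : L) ≠ 0 := (map_ne_zero σ).mpr (by exact_mod_cast hx)
  refine ⟨y / σ x, fun j => ?_⟩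
  rw [div_mul_eq_mul_div, eq_div_iff hσx, mul_comm, ← map_mul]
  exact congrFun hy j

theorem exists_mul_mem_fixedField_of_forall_map_eq_mul {K L ι : Type*} [Field K] [Field L]
    [Algebra K L] (H : Subgroup (L ≃ₐ[K] L)) (v : ι → L)
    (hv : ∀ σ ∈ H, ∃ μ : L, ∀ j, σ (v j) = μ * v j) :
    ∃ (α : L) (v' : ι → L), α ≠ 0 ∧ (∀ j, v' j ∈ IntermediateField.fixedField H) ∧
      ∀ j, v j = α * v' j := by
  by_cases hv0 : v = 0
  · exact ⟨1, 0, one_ne_zero, fun _ => zero_mem _, fun j => by simp [hv0]⟩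
  obtain ⟨j₀, hj₀⟩ := Function.ne_iff.mp hv0
  refine ⟨v j₀, fun j => v j / v j₀, hj₀, fun j => ?_, fun j => (mul_div_cancel₀ _ hj₀).symm⟩
  rw [IntermediateField.mem_fixedField_iff]
  intro σ hσ
  obtain ⟨μ, hμ⟩ := hv σ hσ
  have hμ0 : μ ≠ 0 := left_ne_zero_of_mul (hμ j₀ ▸ (map_ne_zero σ).mpr hj₀)
  rw [map_div₀, hμ, hμ, mul_div_mul_left _ _ hμ0]

theorem stmt18_general (L : Type) [Field L] [NumberField L] (d D : ℕ)
    (I : Fin d → Ideal (𝓞 L)) (hI : ∀ k, I k ≠ ⊥)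
    (b : Fin d → Fin D → L)
    (Δ : Fin d → Subgroup (L ≃ₐ[ℚ] L))
    (hΔ : ∀ k (σ : L ≃ₐ[ℚ] L), σ ∈ Δ k ↔
      (fun v : Fin D → L => fun j => σ (v j)) ''
          {v | ∃ x ∈ I k, v = fun j => (x : L) * b k j}
        = {v | ∃ x ∈ I k, v = fun j => (x : L) * b k j}) :
    ∀ k, ∃ (α : L) (b' : Fin D → L), α ≠ 0 ∧
      (∀ j, b' j ∈ IntermediateField.fixedField (Δ k)) ∧
      ∀ j, b k j = α * b' j := fun k =>
  exists_mul_mem_fixedField_of_forall_map_eq_mul (Δ k) (b k) fun σ hσ =>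
    exists_map_eq_mul_of_image_idealMultiples_subset σ (hI k) (b k) ((hΔ k σ).mp hσ).subset

/-- Let L/ℚ be Galois, I₁,…,I_d nonzero ideals of O_L and b₁,…,b_d ∈ L^D L-linearly
independent. For each k, letting Δ_k be the subgroup of the Galois group fixing the
pseudo-ideal I_k b_k setwise (acting coordinatewise) and K_k its fixed field, there is
α_k ∈ L^× and b_k′ ∈ K_k^D with b_k = α_k·b_k′. -/
theorem stmt18 (L : Type) [Field L] [NumberField L] [IsGalois ℚ L] (d D : ℕ)
    (I : Fin d → Ideal (𝓞 L)) (hI : ∀ k, I k ≠ ⊥)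
    (b : Fin d → Fin D → L) (hb : LinearIndependent L b)
    (Δ : Fin d → Subgroup (L ≃ₐ[ℚ] L))
    (hΔ : ∀ k (σ : L ≃ₐ[ℚ] L), σ ∈ Δ k ↔
      (fun v : Fin D → L => fun j => σ (v j)) ''
          {v | ∃ x ∈ I k, v = fun j => (x : L) * b k j}
        = {v | ∃ x ∈ I k, v = fun j => (x : L) * b k j}) :
    ∀ k, ∃ (α : L) (b' : Fin D → L), α ≠ 0 ∧
      (∀ j, b' j ∈ IntermediateField.fixedField (Δ k)) ∧
      ∀ j, b k j = α * b' j :=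
  stmt18_general L d D I hI b Δ hΔ
end
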